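/- arXiv:1907.00741 — 2 statements merged into one kernel-verified Lean document; each statement's English description precedes it below -/
import Mathlib

section
/- Let p be a prime, q = p^d, λ a positive integer, r a positive integer with q^r > λ, μ_r = q^r − 1 − λ, and l the largest index such that the coefficient of p^l in the p-adic expansion of λ is nonzero. Let e be a (λ−1)-admissible sequence and set λ_e = λ − (λ − 1 − ρ_e(λ−1))/2. Then 0 < λ_e ≤ λ and for every integer h with l < h < rd one has (μ_r − ρ_e ρ_h(μ_r))/2 = p^h − λ_e; consequently, for l < h < h' < rd, ρ_e ρ_h(μ_r) ≽ ρ_e ρ_{h'}(μ_r). -/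
/-!
Combinatorics of Deriaz-type reflections for `SL₂` (cf. [De]).  For a prime
`p`, a positive integer `m` and `j ≥ 1`, write `m + 1 = λ_j p^j + r_j` with
`0 ≤ r_j < p^j` and set `ρ_j(m) = m - 2 r_j`; `ρ_j` is `m`-admissible if
`p ∤ λ_j`.
-/

noncomputable section

/-- The reflection `ρ_j(m) = m − 2·r_j`, where `r_j = (m+1) mod p^j`. -/
def rfl' (p j : ℕ) (m : ℤ) : ℤ := m - 2 * ((m + 1) % ((p : ℤ) ^ j))

/-- `ρ_e = ρ_{e₁} ∘ ⋯ ∘ ρ_{e_k}` for a finite sequence `e = (e₁, …, e_k)`. -/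
def rflSeq (p : ℕ) (e : List ℕ) (m : ℤ) : ℤ := e.foldr (rfl' p) m

/-- `e = (e₁, …, e_k)` is an `m`-admissible sequence: `0 < e₁ < ⋯ < e_k`, the
successive values `m > ρ_{e_k}(m) > ρ_{e_{k-1}}ρ_{e_k}(m) > ⋯` form a strictly
decreasing sequence of positive integers, and at each step `ρ_{e_j}` is
`(ρ_{e_{j+1}} ⋯ ρ_{e_k}(m))`-admissible, i.e. `p ∤ λ_{e_j}`. -/
def IsAdmSeq (p : ℕ) : List ℕ → ℤ → Prop
  | [], _ => True
  | j :: rest, m =>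
      IsAdmSeq p rest m ∧ 0 < j ∧ (∀ j' ∈ rest, j < j') ∧
      ¬ ((p : ℤ) ∣ ((rflSeq p rest m + 1) / (p : ℤ) ^ j)) ∧
      0 < rfl' p j (rflSeq p rest m) ∧
      rfl' p j (rflSeq p rest m) < rflSeq p rest m

/-- The `t`-th digit in the `p`-adic expansion of `n`. -/
def pdigit (p n t : ℕ) : ℕ := n / p ^ t % p

/-- The partial order `λ₁ ≽ λ₂` on weights obtained from `m` by admissible
sequences of reflections: writing `(m − λ₂)/2 = Σ_t m_t p^t` and
`(m − λ₁)/2 = Σ_t n_t p^t` in `p`-adic expansion, `λ₁ ≽ λ₂` iff `m_t = 0`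
implies `n_t = 0` for all `t`. -/
def PrefOrder (p : ℕ) (m lam₁ lam₂ : ℤ) : Prop :=
  ∀ t : ℕ, pdigit p ((m - lam₂) / 2).toNat t = 0 → pdigit p ((m - lam₁) / 2).toNat t = 0

/-!
Write `L = λ`, `N = p^(dr)` and `h` with `l < h < rd`, so that `L ≤ p^h` and `p^h ∣ N`.  Since
`N − L ≡ p^h − L (mod p^h)`, one reflection sends `μ_r = N − 1 − L` to `(L − 1) + (N − 2p^h)`.
Every index `j` of an `(L−1)`-admissible sequence has `p^j ≤ L ≤ p^h`, and `ρ_j` commutes with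
translation by multiples of `p^j`, so `ρ_e ρ_h(μ_r) = ρ_e(L − 1) + N − 2p^h`, which gives
`(μ_r − ρ_e ρ_h(μ_r))/2 = p^h − λ_e`.  Finally `p^h − λ_e` has the digits of `p^h' − λ_e`
below position `h` and no digits from `h` on.
-/

section Reflection

variable {p : ℕ}

lemma rfl'_add_of_dvd {j : ℕ} (m : ℤ) {C : ℤ} (hC : (p : ℤ) ^ j ∣ C) :
    rfl' p j (m + C) = rfl' p j m + C := by
  obtain ⟨k, rfl⟩ := hC
  unfold rfl'
  rw [add_right_comm, Int.add_mul_emod_self_left]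
  ring

lemma rflSeq_add_of_dvd (e : List ℕ) (m : ℤ) {C : ℤ} (hC : ∀ j ∈ e, (p : ℤ) ^ j ∣ C) :
    rflSeq p e (m + C) = rflSeq p e m + C := by
  induction e with
  | nil => rfl
  | cons j e ih =>
    change rfl' p j (rflSeq p e (m + C)) = rfl' p j (rflSeq p e m) + C
    rw [ih fun j' hj' => hC j' (List.mem_cons_of_mem _ hj'),
      rfl'_add_of_dvd _ (hC j List.mem_cons_self)]

lemma two_dvd_sub_rflSeq (e : List ℕ) (m : ℤ) : 2 ∣ m - rflSeq p e m := by
  induction e with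
  | nil => simp [rflSeq]
  | cons j e ih =>
    obtain ⟨k, hk⟩ := ih
    change 2 ∣ m - rfl' p j (rflSeq p e m)
    exact ⟨k + (rflSeq p e m + 1) % (p : ℤ) ^ j, by unfold rfl'; linarith⟩

/-- When `p^h ∣ N` and `0 < L ≤ p^h`, the remainder of `N − L` modulo `p^h` is `p^h − L`. -/
lemma rfl'_sub_sub_of_dvd {h : ℕ} {N L : ℤ} (hN : (p : ℤ) ^ h ∣ N) (hL : 0 < L)
    (hLh : L ≤ (p : ℤ) ^ h) : rfl' p h (N - 1 - L) = L - 1 + (N - 2 * (p : ℤ) ^ h) := by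
  obtain ⟨k, rfl⟩ := hN
  unfold rfl'
  rw [show (p : ℤ) ^ h * k - 1 - L + 1 = ((p : ℤ) ^ h - L) + (p : ℤ) ^ h * (k - 1) by ring,
    Int.add_mul_emod_self_left, Int.emod_eq_of_lt (by linarith) (by linarith)]
  ring

end Reflection

namespace IsAdmSeq

variable {p : ℕ} {e : List ℕ} {m : ℤ}

lemma rflSeq_le (he : IsAdmSeq p e m) : rflSeq p e m ≤ m := by
  induction e with
  | nil => exact le_rfl
  | cons j e ih => exact (he.2.2.2.2.2).le.trans (ih he.1)

lemma rflSeq_nonneg (he : IsAdmSeq p e m) (hm : 0 ≤ m) : 0 ≤ rflSeq p e m := by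
  cases e with
  | nil => exact hm
  | cons j e => exact he.2.2.2.2.1.le

/-- An admissible reflection `ρ_j` of `m` has `λ_j ≠ 0`, so `p^j ≤ m + 1`. -/
lemma pow_le_add_one (he : IsAdmSeq p e m) : ∀ j ∈ e, (p : ℤ) ^ j ≤ m + 1 := by
  induction e with
  | nil => simp
  | cons j e ih =>
    obtain ⟨he, -, -, hndvd, hpos, hlt⟩ := he
    have hj : (p : ℤ) ^ j ≤ rflSeq p e m + 1 := by
      by_contra! hj
      exact hndvd (by rw [Int.ediv_eq_zero_of_lt (by linarith) hj]; exact dvd_zero _)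
    have hle := rflSeq_le he
    rintro j' (_ | ⟨_, hj'⟩)
    · linarith
    · exact ih he j' hj'

end IsAdmSeq

/-- The paper's `λ_e`. -/
def admWeight (p : ℕ) (e : List ℕ) (L : ℤ) : ℤ := L - (L - 1 - rflSeq p e (L - 1)) / 2

namespace IsAdmSeq

variable {p : ℕ} {e : List ℕ} {L : ℤ}

lemma admWeight_pos (he : IsAdmSeq p e (L - 1)) (hL : 0 < L) : 0 < admWeight p e L := by
  have := he.rflSeq_nonneg (by linarith)
  unfold admWeight
  omega

lemma admWeight_le (he : IsAdmSeq p e (L - 1)) (hL : 0 < L) : admWeight p e L ≤ L := by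
  have := he.rflSeq_le
  have := he.rflSeq_nonneg (by linarith)
  unfold admWeight
  omega

lemma rflSeq_rfl'_sub_sub (hp : 1 < p) (he : IsAdmSeq p e (L - 1)) {h : ℕ} {N : ℤ}
    (hN : (p : ℤ) ^ h ∣ N) (hL : 0 < L) (hLh : L ≤ (p : ℤ) ^ h) :
    rflSeq p e (rfl' p h (N - 1 - L)) = rflSeq p e (L - 1) + (N - 2 * (p : ℤ) ^ h) := by
  rw [rfl'_sub_sub_of_dvd hN hL hLh, rflSeq_add_of_dvd]
  intro j hj
  have hjh : j ≤ h := by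
    have := he.pow_le_add_one j hj
    exact (pow_le_pow_iff_right₀ (by exact_mod_cast hp)).mp (by linarith)
  exact dvd_sub ((pow_dvd_pow _ hjh).trans hN) (Dvd.dvd.mul_left (pow_dvd_pow _ hjh) 2)

lemma sub_rflSeq_rfl'_div_two (hp : 1 < p) (he : IsAdmSeq p e (L - 1)) {h : ℕ} {N : ℤ}
    (hN : (p : ℤ) ^ h ∣ N) (hL : 0 < L) (hLh : L ≤ (p : ℤ) ^ h) :
    (N - 1 - L - rflSeq p e (rfl' p h (N - 1 - L))) / 2 = (p : ℤ) ^ h - admWeight p e L := by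
  rw [he.rflSeq_rfl'_sub_sub hp hN hL hLh]
  have := two_dvd_sub_rflSeq (p := p) e (L - 1)
  unfold admWeight
  omega

end IsAdmSeq

section Digits

variable {p : ℕ}

lemma lt_pow_succ_of_pdigit_eq_zero (hp : 1 < p) {n l : ℕ}
    (hn : ∀ t, l < t → pdigit p n t = 0) : n < p ^ (l + 1) := by
  by_contra! hle
  have hn0 : n ≠ 0 := (hle.trans_lt' (by positivity)).ne'
  set k := Nat.log p n
  have hlk : l < k := (Nat.le_log_iff_pow_le hp hn0).mpr hle
  have hlow : 1 ≤ n / p ^ k := (Nat.one_le_div_iff (by positivity)).mpr (Nat.pow_log_le_self p hn0)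
  have hhigh : n / p ^ k < p :=
    Nat.div_lt_of_lt_mul (by rw [← pow_succ]; exact Nat.lt_pow_succ_log_self hp n)
  have := hn k hlk
  rw [pdigit, Nat.mod_eq_of_lt hhigh] at this
  omega

lemma pdigit_add_pow_succ_mul (hp : 0 < p) (n t k : ℕ) :
    pdigit p (n + p ^ (t + 1) * k) t = pdigit p n t := by
  unfold pdigit
  rw [pow_succ, mul_assoc, Nat.add_mul_div_left _ _ (pow_pos hp _), Nat.add_mul_mod_self_left]

lemma pdigit_eq_zero_of_lt {n t : ℕ} (hn : n < p ^ t) : pdigit p n t = 0 := by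
  rw [pdigit, Nat.div_eq_of_lt hn, Nat.zero_mod]

lemma pdigit_pow_sub_eq_zero (hp : 1 < p) {A h h' t : ℕ} (hA : 0 < A) (hAh : A ≤ p ^ h)
    (hhh' : h ≤ h') (ht : pdigit p (p ^ h' - A) t = 0) : pdigit p (p ^ h - A) t = 0 := by
  rcases lt_or_ge t h with hth | hht
  · obtain ⟨k, hk⟩ : p ^ (t + 1) ∣ p ^ h' - p ^ h :=
      Nat.dvd_sub (pow_dvd_pow p (by omega)) (pow_dvd_pow p hth)
    have hpow : p ^ h ≤ p ^ h' := Nat.pow_le_pow_right (by omega) hhh'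
    rwa [show p ^ h' - A = p ^ h - A + p ^ (t + 1) * k by omega,
      pdigit_add_pow_succ_mul (by omega)] at ht
  · exact pdigit_eq_zero_of_lt ((Nat.sub_lt (by positivity) hA).trans_le
      (Nat.pow_le_pow_right (by omega) hht))

lemma pdigit_toNat_pow_sub_eq_zero (hp : 1 < p) {w : ℤ} {h h' t : ℕ} (hw : 0 < w)
    (hwh : w ≤ (p : ℤ) ^ h) (hhh' : h ≤ h') (ht : pdigit p ((p : ℤ) ^ h' - w).toNat t = 0) :
    pdigit p ((p : ℤ) ^ h - w).toNat t = 0 := by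
  lift w to ℕ using hw.le
  have hwh' : w ≤ p ^ h' := by
    exact_mod_cast hwh.trans (pow_le_pow_right₀ (by exact_mod_cast hp.le) hhh')
  simp only [← Nat.cast_pow, ← Nat.cast_sub (by exact_mod_cast hwh), ← Nat.cast_sub hwh',
    Int.toNat_natCast] at ht ⊢
  exact pdigit_pow_sub_eq_zero hp (by exact_mod_cast hw) (by exact_mod_cast hwh) hhh' ht

end Digits

theorem admissible_reflection_of_mu_general
    (p : ℕ) (hp : p.Prime) (d : ℕ)
    (lam : ℕ) (hlam : 0 < lam)
    (r : ℕ)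
    (l : ℕ) (hl' : ∀ t, l < t → pdigit p lam t = 0)
    (e : List ℕ) (he : IsAdmSeq p e ((lam : ℤ) - 1)) :
    (0 < (lam : ℤ) - ((lam : ℤ) - 1 - rflSeq p e ((lam : ℤ) - 1)) / 2 ∧
      (lam : ℤ) - ((lam : ℤ) - 1 - rflSeq p e ((lam : ℤ) - 1)) / 2 ≤ (lam : ℤ)) ∧
    (∀ h : ℕ, l < h → h < r * d →
      ((p : ℤ) ^ (d * r) - 1 - lam -
          rflSeq p e (rfl' p h ((p : ℤ) ^ (d * r) - 1 - lam))) / 2 =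
        (p : ℤ) ^ h -
          ((lam : ℤ) - ((lam : ℤ) - 1 - rflSeq p e ((lam : ℤ) - 1)) / 2)) ∧
    (∀ h h' : ℕ, l < h → h < h' → h' < r * d →
      PrefOrder p ((p : ℤ) ^ (d * r) - 1 - lam)
        (rflSeq p e (rfl' p h ((p : ℤ) ^ (d * r) - 1 - lam)))
        (rflSeq p e (rfl' p h' ((p : ℤ) ^ (d * r) - 1 - lam)))) := by
  have hp1 := hp.one_lt
  have hL : (0 : ℤ) < lam := by exact_mod_cast hlam
  have hL_le : ∀ h, l < h → (lam : ℤ) ≤ (p : ℤ) ^ h := fun h hlh => by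
    exact_mod_cast (lt_pow_succ_of_pdigit_eq_zero hp1 hl').le.trans
      (Nat.pow_le_pow_right hp.pos hlh)
  have hdvd : ∀ h, h < r * d → (p : ℤ) ^ h ∣ (p : ℤ) ^ (d * r) := fun h hh =>
    pow_dvd_pow _ (by rw [mul_comm]; exact hh.le)
  have hhalf : ∀ h, l < h → h < r * d →
      ((p : ℤ) ^ (d * r) - 1 - lam - rflSeq p e (rfl' p h ((p : ℤ) ^ (d * r) - 1 - lam))) / 2 =
        (p : ℤ) ^ h - admWeight p e lam := fun h hlh hh =>
    he.sub_rflSeq_rfl'_div_two hp1 (hdvd h hh) hL (hL_le h hlh)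
  refine ⟨⟨he.admWeight_pos hL, he.admWeight_le hL⟩, hhalf, ?_⟩
  intro h h' hlh hhh' hh' t
  rw [hhalf h hlh (hhh'.trans hh'), hhalf h' (hlh.trans hhh') hh']
  exact pdigit_toNat_pow_sub_eq_zero hp1 (he.admWeight_pos hL)
    ((he.admWeight_le hL).trans (hL_le h hlh)) hhh'.le

/-- **Lemma 4.8.**  Let `p` be a prime, `q = p^d`, `λ > 0`, `r > 0` with
`q^r > λ`, `μ_r = q^r − 1 − λ`, and let `l` be the largest index whose digit
in the `p`-adic expansion of `λ` is nonzero.  For any `(λ−1)`-admissible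
sequence `e`, the integer `λ_e = λ − (λ − 1 − ρ_e(λ−1))/2` satisfies
`0 < λ_e ≤ λ`, it is independent of `h`, and for every `l < h < rd` one has
`(μ_r − ρ_e ρ_h(μ_r))/2 = p^h − λ_e`.  Consequently, for `l < h < h' < rd`,
`ρ_e ρ_h(μ_r) ≽ ρ_e ρ_{h'}(μ_r)`. -/
theorem admissible_reflection_of_mu
    (p : ℕ) (hp : p.Prime) (d : ℕ) (hd : 0 < d)
    (lam : ℕ) (hlam : 0 < lam)
    (r : ℕ) (hr : 0 < r) (hqr : (lam : ℤ) < (p : ℤ) ^ (d * r))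
    (l : ℕ) (hl : pdigit p lam l ≠ 0) (hl' : ∀ t, l < t → pdigit p lam t = 0)
    (e : List ℕ) (he : IsAdmSeq p e ((lam : ℤ) - 1)) :
    (0 < (lam : ℤ) - ((lam : ℤ) - 1 - rflSeq p e ((lam : ℤ) - 1)) / 2 ∧
      (lam : ℤ) - ((lam : ℤ) - 1 - rflSeq p e ((lam : ℤ) - 1)) / 2 ≤ (lam : ℤ)) ∧
    (∀ h : ℕ, l < h → h < r * d →
      ((p : ℤ) ^ (d * r) - 1 - lam -
          rflSeq p e (rfl' p h ((p : ℤ) ^ (d * r) - 1 - lam))) / 2 =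
        (p : ℤ) ^ h -
          ((lam : ℤ) - ((lam : ℤ) - 1 - rflSeq p e ((lam : ℤ) - 1)) / 2)) ∧
    (∀ h h' : ℕ, l < h → h < h' → h' < r * d →
      PrefOrder p ((p : ℤ) ^ (d * r) - 1 - lam)
        (rflSeq p e (rfl' p h ((p : ℤ) ^ (d * r) - 1 - lam)))
        (rflSeq p e (rfl' p h' ((p : ℤ) ^ (d * r) - 1 - lam)))) :=
  admissible_reflection_of_mu_general p hp d lam hlam r l hl' e he
end
end

section
/- Let G = SL₂(𝔽̄_q), k = 𝔽̄_q, and λ a positive integer, regarded as the character of the upper-triangular Borel subgroup B sending diag(t, t^{-1})·u to t^λ. Then the induced module M(λ) = kG ⊗_{kB} k_λ admits an infinite strictly decreasing chain of kG-submodules; in particular, M(λ) has no composition series of finite length. -/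
open MonoidAlgebra

noncomputable section

/-- The element of the group algebra `k[G]` corresponding to a group element. -/
def ga (k : Type) [Field k] {G : Type} [Group G] (g : G) : MonoidAlgebra k G :=
  MonoidAlgebra.single g 1

/-- The left ideal of `k[G]` defining the induced module `k[G] ⊗_{k[H]} k_χ`
of a character `χ` of a subgroup `H ≤ G`: it is generated by the elements
`b - χ(b)·1`, `b ∈ H`. -/
def indIdeal (k : Type) [Field k] {G : Type} [Group G] (H : Subgroup G) (χ : H → k) :
    Submodule (MonoidAlgebra k G) (MonoidAlgebra k G) :=
  Submodule.span (MonoidAlgebra k G)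
    {x | ∃ b : H, x = ga k (b : G) - MonoidAlgebra.single 1 (χ b)}

/-- The induced module `M(χ) = k[G] ⊗_{k[H]} k_χ`, realised as the quotient of
`k[G]` by the left ideal `indIdeal k H χ`. -/
abbrev IndMod (k : Type) [Field k] {G : Type} [Group G] (H : Subgroup G) (χ : H → k) : Type :=
  MonoidAlgebra k G ⧸ indIdeal k H χ

/-- The canonical generator `1 ⊗ 1_χ` of the induced module. -/
def indGen (k : Type) [Field k] {G : Type} [Group G] (H : Subgroup G) (χ : H → k) :
    IndMod k H χ := Submodule.Quotient.mk 1

/-- The upper triangular Borel subgroup of `SL₂(k)`. -/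
def upperB (k : Type) [Field k] : Subgroup (Matrix.SpecialLinearGroup (Fin 2) k) where
  carrier := {g | (g : Matrix (Fin 2) (Fin 2) k) 1 0 = 0}
  one_mem' := by
    simp [Matrix.SpecialLinearGroup.coe_one, Matrix.one_apply_ne]
  mul_mem' := by
    intro a b ha hb
    simp only [Set.mem_setOf_eq] at *
    simp [Matrix.SpecialLinearGroup.coe_mul, Matrix.mul_apply, Fin.sum_univ_two, ha, hb]
  inv_mem' := by
    intro g hg
    simp only [Set.mem_setOf_eq] at *
    rw [Matrix.SpecialLinearGroup.coe_inv, Matrix.adjugate_fin_two]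
    simp [hg]

/-!
Let `ψₙ` be the inverse of the Frobenius power `x ↦ x ^ p ^ n` and `d = pⁿλ`. The functions
`g ↦ ψₙ(g₀₀) ^ j * ψₙ(g₁₀) ^ (d - j)`, `j ≤ d`, span a finite-dimensional space `Wₙ` of functions
on `SL₂(k)` that is stable under left translation (the first column transforms linearly) and on
which `B` acts on the right through `λ`. Hence the annihilator `Kₙ` of `Wₙ` in `k[G]` is a left
ideal containing the defining ideal of `M(λ)`. Since `ψₙ = ψₙ₊₁ ^ p`, we have `Wₙ ⊆ Wₙ₊₁`, and the
inclusion is strict: on lower unitriangular matrices with entry `t ^ p ^ (n + 1)` the functions of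
`Wₙ` become polynomials in `t ^ p`, whereas `ψₙ₊₁(g₀₀) * ψₙ₊₁(g₁₀) ^ (pd - 1)` becomes
`t ^ (pd - 1)`. As `Wₙ` is finite-dimensional, point evaluations separate it from any function
outside it, so the `Kₙ` decrease strictly, and so do their images in `M(λ)`.
-/

open Submodule
open scoped MatrixGroups

section Annihilator

variable {k G : Type*} [CommSemiring k]

variable (k G) in
def funDual : (G → k) ≃ₗ[k] Module.Dual k (MonoidAlgebra k G) :=
  (MonoidAlgebra.basis G k).constr k

theorem funDual_single (f : G → k) (g : G) (c : k) :
    funDual k G f (MonoidAlgebra.single g c) = c * f g := by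
  rw [← mul_one c, ← MonoidAlgebra.smul_single', map_smul, mul_one, funDual,
    ← MonoidAlgebra.basis_apply, Module.Basis.constr_basis, smul_eq_mul]

theorem funDual_eq_zero_of_mem_span {s : Set (G → k)} {x : MonoidAlgebra k G}
    (hx : ∀ f ∈ s, funDual k G f x = 0) {f : G → k} (hf : f ∈ span k s) :
    funDual k G f x = 0 :=
  (span_le (p := LinearMap.ker ((funDual k G).toLinearMap.flip x)) |>.mpr hx) hf

variable [Monoid G]

theorem funDual_single_one_mul (f : G → k) (h : G) (x : MonoidAlgebra k G) :
    funDual k G f (MonoidAlgebra.single h 1 * x) = funDual k G (fun g => f (h * g)) x := by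
  induction x using MonoidAlgebra.induction_linear with
  | zero => simp
  | add x y hx hy => rw [mul_add, map_add, map_add, hx, hy]
  | single g c => rw [MonoidAlgebra.single_mul_single, one_mul, funDual_single, funDual_single]

def annihilatorIdeal (s : Set (G → k))
    (hs : ∀ h : G, ∀ f ∈ s, (fun g => f (h * g)) ∈ span k s) :
    Submodule (MonoidAlgebra k G) (MonoidAlgebra k G) where
  carrier := {x | ∀ f ∈ s, funDual k G f x = 0}
  add_mem' hx hy f hf := by simp [hx f hf, hy f hf]
  zero_mem' _ _ := map_zero _
  smul_mem' r x hx f hf := by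
    induction r using MonoidAlgebra.induction_linear with
    | zero => simp
    | add r r' hr hr' => rw [add_smul, map_add, hr, hr', add_zero]
    | single h c =>
      rw [smul_eq_mul, ← mul_one c, ← MonoidAlgebra.smul_single', smul_mul_assoc, map_smul,
        funDual_single_one_mul, funDual_eq_zero_of_mem_span hx (hs h f hf), smul_zero]

theorem annihilatorIdeal_anti {s t : Set (G → k)} {hs ht} (hst : s ⊆ t) :
    annihilatorIdeal t ht ≤ annihilatorIdeal s hs :=
  fun _ hx f hf => hx f (hst hf)

end Annihilator

section AnnihilatorField

variable {k G : Type*} [Field k] [Monoid G]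

theorem annihilatorIdeal_lt {s t : Set (G → k)} {hs ht} (hfin : s.Finite) (hst : s ⊆ t)
    {f : G → k} (hft : f ∈ t) (hfs : f ∉ span k s) :
    annihilatorIdeal t ht < annihilatorIdeal s hs := by
  refine lt_of_le_not_ge (annihilatorIdeal_anti hst) fun hle => hfs ?_
  have := hfin.to_subtype
  have hker : ⨅ g : s, LinearMap.ker (funDual k G g) ≤ LinearMap.ker (funDual k G f) :=
    fun x hx => hle (fun g hg => (mem_iInf _).mp hx ⟨g, hg⟩) f hft
  have hspan := mem_span_of_iInf_ker_le_ker hker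
  rw [← Set.image_eq_range, ← LinearEquiv.coe_coe, span_image, mem_map] at hspan
  obtain ⟨f', hf', hff'⟩ := hspan
  rwa [← (funDual k G).injective hff']

end AnnihilatorField

theorem indIdeal_le_annihilatorIdeal {k G : Type} [Field k] [Group G] (H : Subgroup G)
    (χ : H → k) {s : Set (G → k)} {hs} (hχ : ∀ f ∈ s, ∀ b : H, f b = χ b * f 1) :
    indIdeal k H χ ≤ annihilatorIdeal s hs := by
  refine span_le.mpr ?_
  rintro _ ⟨b, rfl⟩ f hf
  rw [ga, map_sub, funDual_single, funDual_single, hχ f hf, one_mul, sub_self]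

theorem Submodule.strictAnti_map_mkQ {R M ι : Type*} [Ring R] [AddCommGroup M] [Module R M]
    [Preorder ι] {I : Submodule R M} {N : ι → Submodule R M} (hN : StrictAnti N)
    (hI : ∀ i, I ≤ N i) : StrictAnti fun i => (N i).map I.mkQ := by
  intro i j hij
  refine lt_of_le_of_ne (map_mono (hN hij).le) fun h => (hN hij).ne ?_
  simpa [comap_map_mkQ, sup_eq_right.mpr (hI _)] using congrArg (comap I.mkQ) h

theorem not_exists_compositionSeries_of_strictAnti {R M : Type*} [Ring R] [AddCommGroup M]
    [Module R M] {N : ℕ → Submodule R M} (hN : StrictAnti N) :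
    ¬∃ c : CompositionSeries (Submodule R M), c.head = ⊥ ∧ c.last = ⊤ := fun hc =>
  have := (isFiniteLength_iff_isNoetherian_isArtinian.mp
    (isFiniteLength_iff_exists_compositionSeries.mpr hc)).2
  not_strictAnti_of_wellFoundedLT N hN

theorem pow_notMem_span_range_pow {k ι : Type*} [Field k] [Infinite k] [Fintype ι]
    {e : ℕ} {m : ι → ℕ} (he : ∀ i, m i ≠ e) :
    (fun t : k => t ^ e) ∉ span k (Set.range fun i t => t ^ m i) := by
  classical
  rw [mem_span_range_iff_exists_fun]
  rintro ⟨c, hc⟩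
  have hpoly : (∑ i, Polynomial.C (c i) * Polynomial.X ^ m i : Polynomial k) = Polynomial.X ^ e :=
    Polynomial.funext fun t => by simpa [Polynomial.eval_finsetSum] using congrFun hc t
  have := congrArg (Polynomial.coeff · e) hpoly
  simp [fun i => (he i).symm] at this

theorem linear_pow_mul_linear_pow_mem_span {k α : Type*} [Field k] (x y : α → k) (A B C D : k)
    {j d : ℕ} (hj : j ≤ d) :
    (fun a => (A * x a + B * y a) ^ j * (C * x a + D * y a) ^ (d - j)) ∈
      span k (Set.range fun i : Fin (d + 1) => fun a => x a ^ (i : ℕ) * y a ^ (d - i)) := by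
  have hexpand : (fun a => (A * x a + B * y a) ^ j * (C * x a + D * y a) ^ (d - j)) =
      ∑ i ∈ Finset.range (j + 1), ∑ l ∈ Finset.range (d - j + 1),
        (A ^ i * B ^ (j - i) * j.choose i * (C ^ l * D ^ (d - j - l) * (d - j).choose l)) •
          fun a => x a ^ (i + l) * y a ^ (d - (i + l)) := by
    funext a
    simp only [add_pow, Finset.sum_mul_sum, Finset.sum_apply, Pi.smul_apply, smul_eq_mul]
    refine Finset.sum_congr rfl fun i hi => Finset.sum_congr rfl fun l hl => ?_
    have : d - (i + l) = (j - i) + (d - j - l) := by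
      have := Finset.mem_range.mp hi; have := Finset.mem_range.mp hl; omega
    rw [this]
    ring
  rw [hexpand]
  refine sum_mem fun i hi => sum_mem fun l hl => smul_mem _ _ (subset_span ⟨⟨i + l, ?_⟩, rfl⟩)
  have := Finset.mem_range.mp hi; have := Finset.mem_range.mp hl; omega

section Frobenius

variable {k : Type*} [CommSemiring k] (p : ℕ) [ExpChar k p] [PerfectRing k p]

theorem iterateFrobeniusEquiv_symm_pow (n : ℕ) (x : k) :
    (iterateFrobeniusEquiv k p n).symm x ^ p ^ n = x :=
  (iterateFrobeniusEquiv k p n).apply_symm_apply x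

theorem iterateFrobeniusEquiv_symm_pow_self (n : ℕ) (x : k) :
    (iterateFrobeniusEquiv k p n).symm (x ^ p ^ n) = x :=
  (iterateFrobeniusEquiv k p n).symm_apply_apply x

theorem iterateFrobeniusEquiv_symm_succ_pow (n : ℕ) (x : k) :
    (iterateFrobeniusEquiv k p (n + 1)).symm x ^ p = (iterateFrobeniusEquiv k p n).symm x := by
  apply (iterateFrobeniusEquiv k p n).injective
  rw [RingEquiv.apply_symm_apply, iterateFrobeniusEquiv_def, ← pow_mul, ← pow_succ',
    iterateFrobeniusEquiv_symm_pow]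

end Frobenius

section TwistedMonomials

variable (k : Type) [Field k] (p : ℕ) [ExpChar k p] [PerfectRing k p] (lam : ℕ)

def twistedMonomial (n j : ℕ) (g : SL(2, k)) : k :=
  (iterateFrobeniusEquiv k p n).symm (g 0 0) ^ j *
    (iterateFrobeniusEquiv k p n).symm (g 1 0) ^ (p ^ n * lam - j)

def twistedMonomials (n : ℕ) : Set (SL(2, k) → k) :=
  Set.range fun j : Fin (p ^ n * lam + 1) => twistedMonomial k p lam n j

theorem twistedMonomial_mul_left_mem_span {n j : ℕ} (hj : j ≤ p ^ n * lam) (h : SL(2, k)) :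
    (fun g => twistedMonomial k p lam n j (h * g)) ∈ span k (twistedMonomials k p lam n) := by
  set ψ := (iterateFrobeniusEquiv k p n).symm
  have hexpand : (fun g => twistedMonomial k p lam n j (h * g)) = fun g =>
      (ψ (h 0 0) * ψ (g 0 0) + ψ (h 0 1) * ψ (g 1 0)) ^ j *
        (ψ (h 1 0) * ψ (g 0 0) + ψ (h 1 1) * ψ (g 1 0)) ^ (p ^ n * lam - j) := by
    funext g
    simp [twistedMonomial, ψ, Matrix.SpecialLinearGroup.coe_mul, Matrix.mul_apply,
      Fin.sum_univ_two]
  rw [hexpand]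
  exact linear_pow_mul_linear_pow_mem_span _ _ _ _ _ _ hj

theorem twistedMonomial_apply_of_mem_upperB {n j : ℕ} (hj : j ≤ p ^ n * lam) {b : SL(2, k)}
    (hb : b ∈ upperB k) :
    twistedMonomial k p lam n j b = b 0 0 ^ lam * twistedMonomial k p lam n j 1 := by
  have hb0 : b 1 0 = 0 := hb
  by_cases hjd : p ^ n * lam - j = 0
  · obtain rfl : j = p ^ n * lam := by omega
    simp [twistedMonomial, pow_mul, iterateFrobeniusEquiv_symm_pow]
  · simp [twistedMonomial, hb0, hjd]

theorem twistedMonomial_eq_succ (n j : ℕ) :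
    twistedMonomial k p lam n j = twistedMonomial k p lam (n + 1) (p * j) := by
  funext g
  rw [twistedMonomial, twistedMonomial, ← iterateFrobeniusEquiv_symm_succ_pow p n (g 0 0),
    ← iterateFrobeniusEquiv_symm_succ_pow p n (g 1 0), ← pow_mul, ← pow_mul,
    show p ^ (n + 1) * lam - p * j = p * (p ^ n * lam - j) by rw [Nat.mul_sub]; ring_nf]

theorem twistedMonomials_subset_succ (n : ℕ) :
    twistedMonomials k p lam n ⊆ twistedMonomials k p lam (n + 1) := by
  rintro _ ⟨j, rfl⟩
  have hj : (j : ℕ) ≤ p ^ n * lam := Nat.lt_succ_iff.mp j.2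
  refine ⟨⟨p * j, Nat.lt_succ_iff.mpr ?_⟩, (twistedMonomial_eq_succ k p lam n j).symm⟩
  calc p * j ≤ p * (p ^ n * lam) := Nat.mul_le_mul_left p hj
    _ = p ^ (n + 1) * lam := by ring

theorem twistedMonomial_succ_one_notMem_span [Infinite k] (hp : 1 < p) (hlam : 0 < lam) (n : ℕ) :
    twistedMonomial k p lam (n + 1) 1 ∉ span k (twistedMonomials k p lam n) := by
  let u : k → SL(2, k) := fun t => ⟨!![1, 0; t ^ p ^ (n + 1), 1], by simp⟩
  have hu : ∀ t : k, (iterateFrobeniusEquiv k p n).symm (u t 1 0) = t ^ p := fun t => by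
    rw [show u t 1 0 = (t ^ p) ^ p ^ n by simp [u, ← pow_mul, pow_succ'],
      iterateFrobeniusEquiv_symm_pow_self]
  have hlow : LinearMap.funLeft k k u ∘ (fun j : Fin (p ^ n * lam + 1) =>
      twistedMonomial k p lam n j) = fun (j : Fin (p ^ n * lam + 1)) (t : k) =>
        t ^ (p * (p ^ n * lam - j)) := by
    funext j t
    change twistedMonomial k p lam n j (u t) = _
    rw [twistedMonomial, hu, show u t 0 0 = 1 from rfl, map_one, one_pow, one_mul, pow_mul]
  have hhigh : LinearMap.funLeft k k u (twistedMonomial k p lam (n + 1) 1) =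
      fun t => t ^ (p ^ (n + 1) * lam - 1) := by
    funext t
    change twistedMonomial k p lam (n + 1) 1 (u t) = _
    rw [twistedMonomial, show u t 0 0 = 1 from rfl, show u t 1 0 = t ^ p ^ (n + 1) from rfl,
      map_one, one_pow, one_mul, iterateFrobeniusEquiv_symm_pow_self]
  intro hmem
  have := mem_map_of_mem (f := LinearMap.funLeft k k u) hmem
  rw [map_span, twistedMonomials, ← Set.range_comp, hlow, hhigh] at this
  refine pow_notMem_span_range_pow (fun j heq => ?_) this
  have hd : p ^ (n + 1) * lam = p * (p ^ n * lam) := by ring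
  have hpd : p ≤ p * (p ^ n * lam) :=
    Nat.le_mul_of_pos_right p (Nat.mul_pos (pow_pos (by omega) n) hlam)
  have hpj : p * j ≤ p * (p ^ n * lam) := Nat.mul_le_mul_left p (Nat.lt_succ_iff.mp j.2)
  rw [hd, Nat.mul_sub] at heq
  have : p * j = 1 := by omega
  exact absurd (Nat.eq_one_of_mul_eq_one_right this) (by omega)

def twistedAnnihilator (n : ℕ) :
    Submodule (MonoidAlgebra k SL(2, k)) (MonoidAlgebra k SL(2, k)) :=
  annihilatorIdeal (twistedMonomials k p lam n) (by
    rintro h _ ⟨j, rfl⟩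
    exact twistedMonomial_mul_left_mem_span k p lam (Nat.lt_succ_iff.mp j.2) h)

theorem twistedAnnihilator_strictAnti [Infinite k] (hp : 1 < p) (hlam : 0 < lam) :
    StrictAnti (twistedAnnihilator k p lam) := by
  refine strictAnti_nat_of_succ_lt fun n => annihilatorIdeal_lt (Set.finite_range _)
    (twistedMonomials_subset_succ k p lam n) ⟨⟨1, ?_⟩, rfl⟩
    (twistedMonomial_succ_one_notMem_span k p lam hp hlam n)
  have := Nat.mul_pos (pow_pos (by omega : 0 < p) (n + 1)) hlam
  omega

theorem indIdeal_le_twistedAnnihilator (n : ℕ) :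
    indIdeal k (upperB k) (fun b => (b : SL(2, k)) 0 0 ^ lam) ≤ twistedAnnihilator k p lam n :=
  indIdeal_le_annihilatorIdeal _ _ (by
    rintro _ ⟨j, rfl⟩ b
    exact twistedMonomial_apply_of_mem_upperB k p lam (Nat.lt_succ_iff.mp j.2) b.2)

end TwistedMonomials

theorem sl2_induced_module_infinite_chain_general
    (p : ℕ) [Fact p.Prime] (k : Type) [Field k] [IsAlgClosed k] [CharP k p]
    (lam : ℕ) (hlam : 0 < lam) :
    (∃ N : ℕ → Submodule
        (MonoidAlgebra k (Matrix.SpecialLinearGroup (Fin 2) k))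
        (IndMod k (upperB k)
          (fun b : ↥(upperB k) =>
            ((b : Matrix.SpecialLinearGroup (Fin 2) k) : Matrix (Fin 2) (Fin 2) k) 0 0 ^ lam)),
      StrictAnti N) ∧
    ¬∃ c : CompositionSeries (Submodule
        (MonoidAlgebra k (Matrix.SpecialLinearGroup (Fin 2) k))
        (IndMod k (upperB k)
          (fun b : ↥(upperB k) =>
            ((b : Matrix.SpecialLinearGroup (Fin 2) k) : Matrix (Fin 2) (Fin 2) k) 0 0 ^ lam))),
      c.head = ⊥ ∧ c.last = ⊤ := by
  have hN := Submodule.strictAnti_map_mkQ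
    (twistedAnnihilator_strictAnti k p lam (Fact.out : p.Prime).one_lt hlam)
    (indIdeal_le_twistedAnnihilator k p lam)
  exact ⟨⟨_, hN⟩, not_exists_compositionSeries_of_strictAnti hN⟩

/-- **Corollary 4.10.**  Let `G = SL₂(𝔽̄_q)`, `k = 𝔽̄_q` and `λ` a positive
integer, regarded as the character of the upper triangular Borel subgroup `B`
sending `diag(t,t⁻¹)·u ↦ t^λ`.  Then `M(λ) = k[G] ⊗_{k[B]} k_λ` admits an
infinite strictly decreasing chain of `k[G]`-submodules; in particular `M(λ)`
has no composition series of finite length. -/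
theorem sl2_induced_module_infinite_chain
    (p : ℕ) [Fact p.Prime] (k : Type) [Field k] [IsAlgClosed k] [CharP k p]
    (halg : ∀ x : k, ∃ n : ℕ, 0 < n ∧ x ^ p ^ n = x)
    (lam : ℕ) (hlam : 0 < lam) :
    (∃ N : ℕ → Submodule
        (MonoidAlgebra k (Matrix.SpecialLinearGroup (Fin 2) k))
        (IndMod k (upperB k)
          (fun b : ↥(upperB k) =>
            ((b : Matrix.SpecialLinearGroup (Fin 2) k) : Matrix (Fin 2) (Fin 2) k) 0 0 ^ lam)),
      StrictAnti N) ∧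
    ¬∃ c : CompositionSeries (Submodule
        (MonoidAlgebra k (Matrix.SpecialLinearGroup (Fin 2) k))
        (IndMod k (upperB k)
          (fun b : ↥(upperB k) =>
            ((b : Matrix.SpecialLinearGroup (Fin 2) k) : Matrix (Fin 2) (Fin 2) k) 0 0 ^ lam))),
      c.head = ⊥ ∧ c.last = ⊤ :=
  sl2_induced_module_infinite_chain_general p k lam hlam
end
end
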